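/- arXiv:1602.00266 — 4 statements merged into one kernel-verified Lean document; each statement's English description precedes it below -/
import Mathlib

section
/- Let G be a topological group, A a unital C*-algebra, and α a continuous action of G on A by *-automorphisms. Let K ⊆ G be a compact set, δ > 0 and 0 < ε < 2. If u ∈ U₀(A^α_{δ,K}) and v ∈ A is a unitary with ‖v − u‖ ≤ ε, then v ∈ U₀(A^α_{δ+2ε,K}). -/
/-!
Write `v = ζ u` with `ζ = v u*`. Since `‖ζ - 1‖ = ‖v - u‖ < 2`, the spectrum of `ζ` misses `-1`,
so `ζ = exp (i h)` for the self-adjoint principal argument `h` of `ζ`, and `t ↦ exp (i t h)` is a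
path of unitaries from `1` to `ζ` staying within `‖ζ - 1‖` of `1`. Multiply the given path to `u`
pointwise by this one: `α_g` is a contractive unital *-homomorphism, so it moves a unitary `z`
by at most `2 ‖z - 1‖`, and for unitaries the displacements of the factors of a product add up.
-/

open Filter Topology

/-- `u ∈ U₀(A^α_{ε,K})`: there is a norm-continuous path `w : [0,1] → U(A)` with
`w 0 = 1`, `w 1 = u`, and `‖α_g (w t) - w t‖ ≤ ε` for all `t ∈ [0,1]` and `g ∈ K`. -/
def UZero {G A : Type*} [TopologicalSpace G] [CStarAlgebra A]
    (α : G → A ≃⋆ₐ[ℂ] A) (ε : ℝ) (K : Set G) (u : A) : Prop :=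
  ∃ w : ℝ → A, ContinuousOn w (Set.Icc 0 1) ∧ w 0 = 1 ∧ w 1 = u ∧
    (∀ t ∈ Set.Icc (0:ℝ) 1, w t ∈ unitary A) ∧
    (∀ t ∈ Set.Icc (0:ℝ) 1, ∀ g ∈ K, ‖α g (w t) - w t‖ ≤ ε)

section StarHom

variable {A F : Type*}

lemma norm_map_mul_sub_mul_le [NormedRing A] [StarRing A] [CStarRing A] [FunLike F A A]
    [RingHomClass F A A] [StarHomClass F A A] (φ : F) {a b : A}
    (ha : a ∈ unitary A) (hb : b ∈ unitary A) :
    ‖φ (a * b) - a * b‖ ≤ ‖φ a - a‖ + ‖φ b - b‖ := by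
  have hsplit : φ (a * b) - a * b = (φ a - a) * φ b + a * (φ b - b) := by
    rw [map_mul]; noncomm_ring
  calc ‖φ (a * b) - a * b‖ ≤ ‖(φ a - a) * φ b‖ + ‖a * (φ b - b)‖ := hsplit ▸ norm_add_le _ _
    _ = ‖φ a - a‖ + ‖φ b - b‖ := by
      rw [CStarRing.norm_mul_mem_unitary _ (Unitary.map_mem φ hb),
        CStarRing.norm_mem_unitary_mul _ ha]

lemma norm_map_sub_self_le_two_mul_norm_sub_one [CStarAlgebra A] [FunLike F A A]
    [AlgHomClass F ℂ A A] [StarHomClass F A A] (φ : F) (a : A) :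
    ‖φ a - a‖ ≤ 2 * ‖a - 1‖ :=
  calc ‖φ a - a‖ = ‖φ (a - 1) - (a - 1)‖ := by rw [map_sub, map_one, sub_sub_sub_cancel_right]
    _ ≤ ‖φ (a - 1)‖ + ‖a - 1‖ := norm_sub_le _ _
    _ ≤ 2 * ‖a - 1‖ := by linarith [NonUnitalStarAlgHom.norm_apply_le φ (a - 1)]

end StarHom

lemma Unitary.exists_path_one_norm_sub_one_le {A : Type*} [CStarAlgebra A] {ζ : unitary A}
    (hζ : ‖(ζ - 1 : A)‖ < 2) :
    ∃ γ : Path (1 : unitary A) ζ, ∀ t, ‖(γ t - 1 : A)‖ ≤ ‖(ζ - 1 : A)‖ :=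
  ⟨Unitary.path 1 ζ (by simpa using hζ), fun t => by
    simpa using norm_expUnitary_smul_argSelfAdjoint_sub_one_le ζ t.2 hζ⟩

lemma UZero.unitary_mul {G A : Type*} [TopologicalSpace G] [CStarAlgebra A]
    {α : G → A ≃⋆ₐ[ℂ] A} {δ r : ℝ} {K : Set G} {u : A} (hu : UZero α δ K u)
    {ζ : unitary A} (γ : Path 1 ζ) (hγ : ∀ t, ‖(γ t - 1 : A)‖ ≤ r) :
    UZero α (δ + 2 * r) K (ζ * u) := by
  obtain ⟨w, hwc, hw0, hw1, hwu, hwb⟩ := hu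
  refine ⟨fun t => (γ.extend t : A) * w t,
    (continuous_subtype_val.comp γ.continuous_extend).continuousOn.mul hwc,
    by simp [hw0], by simp [hw1], fun t ht => mul_mem (γ.extend t).2 (hwu t ht),
    fun t ht g hg => ?_⟩
  simp only [γ.extend_apply ht]
  calc ‖α g (γ ⟨t, ht⟩ * w t) - γ ⟨t, ht⟩ * w t‖
      ≤ ‖α g (γ ⟨t, ht⟩) - γ ⟨t, ht⟩‖ + ‖α g (w t) - w t‖ :=
        norm_map_mul_sub_mul_le (α g) (γ _).2 (hwu t ht)
    _ ≤ 2 * r + δ := by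
      gcongr
      · exact (norm_map_sub_self_le_two_mul_norm_sub_one (α g) _).trans (by gcongr; exact hγ _)
      · exact hwb t ht g hg
    _ = δ + 2 * r := add_comm _ _

theorem stmt1_general {G A : Type*} [TopologicalSpace G]
    [CStarAlgebra A]
    (α : G → A ≃⋆ₐ[ℂ] A)
    (K : Set G)
    (δ : ℝ) (ε : ℝ) (hε2 : ε < 2)
    (u : A) (hu : u ∈ unitary A) (hu0 : UZero α δ K u)
    (v : A) (hv : v ∈ unitary A) (hvu : ‖v - u‖ ≤ ε) :
    UZero α (δ + 2 * ε) K v := by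
  set ζ : unitary A := ⟨v, hv⟩ * star ⟨u, hu⟩
  have hζ : ‖(ζ - 1 : A)‖ = ‖v - u‖ := (Unitary.norm_sub_eq ⟨v, hv⟩ ⟨u, hu⟩).symm
  obtain ⟨γ, hγ⟩ := Unitary.exists_path_one_norm_sub_one_le (hζ ▸ hvu.trans_lt hε2)
  have hζu : (ζ : A) * u = v := by
    simp [ζ, mul_assoc, (Unitary.mem_iff.mp hu).1]
  simpa [hζu] using hu0.unitary_mul γ fun t => (hγ t).trans (hζ ▸ hvu)

/-- If `u ∈ U₀(A^α_{δ,K})` and `v` is a unitary with `‖v - u‖ ≤ ε < 2`, then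
`v ∈ U₀(A^α_{δ+2ε,K})`. -/
theorem stmt1 {G A : Type*} [Group G] [TopologicalSpace G] [IsTopologicalGroup G]
    [CStarAlgebra A]
    (α : G → A ≃⋆ₐ[ℂ] A)
    (hmul : ∀ g h : G, α (g * h) = (α h).trans (α g))
    (hcont : ∀ a : A, Continuous fun g => α g a)
    (K : Set G) (hK : IsCompact K)
    (δ : ℝ) (hδ : 0 < δ) (ε : ℝ) (hε0 : 0 < ε) (hε2 : ε < 2)
    (u : A) (hu : u ∈ unitary A) (hu0 : UZero α δ K u)
    (v : A) (hv : v ∈ unitary A) (hvu : ‖v - u‖ ≤ ε) :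
    UZero α (δ + 2 * ε) K v :=
  stmt1_general α K δ ε hε2 u hu hu0 v hv hvu
end

section
/- Let G be a second-countable, locally compact group, A a C*-algebra, and α a continuous action of G on A by *-automorphisms. Let (x_n)_{n∈ℕ} be a bounded sequence in A which defines a continuous element of the sequence algebra, i.e., for every g₀ ∈ G and ε > 0 there is a neighbourhood U of g₀ such that limsup_{n→∞} ‖α_g(x_n) − α_{g₀}(x_n)‖ ≤ ε for all g ∈ U. Then for every g₀ ∈ G and δ > 0 there exists an open neighbourhood U of g₀ such that sup_{k∈ℕ} sup_{g∈U} ‖α_g(x_k) − α_{g₀}(x_k)‖ ≤ δ. In particular, the map sending g to the bounded sequence (α_g(x_n))_n is continuous with respect to the supremum norm over n. -/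
open Filter Topology

/-!
By Baire's theorem on the locally compact group `G`, the closed sets
`{g | ∀ n ≥ m, ‖α_g(x_n) - α_{g₀}(x_n)‖ ≤ r}`, which cover a neighbourhood of `g₀`, cannot all have
empty interior: the tail estimate holds uniformly on some open set `W ∋ g₁`. Since the action is
isometric, `‖α_g(a) - α_{g₀}(a)‖ = ‖α_{hg}(a) - α_{g₁}(a)‖` for `h = g₁g₀⁻¹`, so translating `W`
back to `g₀` gives the tail estimate uniformly near `g₀`; the finitely many remaining indices are
handled by continuity of each orbit map.
-/

theorem exists_nonempty_interior_of_isOpen_subset_iUnion {X ι : Type*} [TopologicalSpace X]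
    [BaireSpace X] [Countable ι] {V : Set X} (hV : IsOpen V) (hne : V.Nonempty)
    {F : ι → Set X} (hF : ∀ i, IsClosed (F i)) (hcov : V ⊆ ⋃ i, F i) :
    ∃ i, (interior (F i)).Nonempty := by
  by_contra! h
  refine not_isMeagre_of_isOpen hV hne ((isMeagre_iUnion fun i => ?_).mono hcov)
  exact IsNowhereDense.isMeagre ((hF i).isNowhereDense_iff.mpr (h i))

section IsometricAction

variable {G A : Type*} [NonUnitalCStarAlgebra A] (α : G → A ≃⋆ₐ[ℂ] A)

theorem norm_map_mul_sub_map_mul [Group G] (hmul : ∀ g h : G, α (g * h) = (α h).trans (α g))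
    (h g g' : G) (a : A) : ‖α (h * g) a - α (h * g') a‖ = ‖α g a - α g' a‖ := by
  rw [hmul, hmul, StarAlgEquiv.trans_apply, StarAlgEquiv.trans_apply, ← map_sub]
  exact StarAlgEquiv.norm_map (α h) _

def tailBoundSet (x : ℕ → A) (g₀ : G) (r : ℝ) (m : ℕ) : Set G :=
  {g | ∀ n ≥ m, ‖α g (x n) - α g₀ (x n)‖ ≤ r}

variable {α}

theorem mem_tailBoundSet_of_limsup_lt {x : ℕ → A} (hbdd : ∃ C : ℝ, ∀ n, ‖x n‖ ≤ C) {g₀ g : G}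
    {r : ℝ} (hr : limsup (fun n => ‖α g (x n) - α g₀ (x n)‖) atTop < r) :
    ∃ m, g ∈ tailBoundSet α x g₀ r m := by
  obtain ⟨C, hC⟩ := hbdd
  have hbddAbove : IsBoundedUnder (· ≤ ·) atTop fun n => ‖α g (x n) - α g₀ (x n)‖ :=
    isBoundedUnder_of ⟨C + C, fun n => (norm_sub_le _ _).trans <| by
      rw [StarAlgEquiv.norm_map, StarAlgEquiv.norm_map]; exact add_le_add (hC n) (hC n)⟩
  obtain ⟨m, hm⟩ := eventually_atTop.mp (eventually_lt_of_limsup_lt hr hbddAbove)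
  exact ⟨m, fun n hn => (hm n hn).le⟩

theorem mem_tailBoundSet_of_mul_mem [Group G] (hmul : ∀ g h : G, α (g * h) = (α h).trans (α g))
    {x : ℕ → A} {g₀ g₁ g : G} {r : ℝ} {m : ℕ} (hg₁ : g₁ ∈ tailBoundSet α x g₀ r m)
    (hg : g₁ * g₀⁻¹ * g ∈ tailBoundSet α x g₀ r m) : g ∈ tailBoundSet α x g₀ (2 * r) m := by
  intro n hn
  calc ‖α g (x n) - α g₀ (x n)‖
      = ‖α (g₁ * g₀⁻¹ * g) (x n) - α (g₁ * g₀⁻¹ * g₀) (x n)‖ :=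
        (norm_map_mul_sub_map_mul α hmul _ _ _ _).symm
    _ = ‖α (g₁ * g₀⁻¹ * g) (x n) - α g₁ (x n)‖ := by rw [inv_mul_cancel_right]
    _ ≤ ‖α (g₁ * g₀⁻¹ * g) (x n) - α g₀ (x n)‖ + ‖α g₀ (x n) - α g₁ (x n)‖ :=
        norm_sub_le_norm_sub_add_norm_sub _ _ _
    _ ≤ 2 * r := by rw [norm_sub_rev (α g₀ _)]; linarith [hg n hn, hg₁ n hn]

variable [TopologicalSpace G] (hcont : ∀ a : A, Continuous fun g => α g a)
include hcont

theorem isClosed_tailBoundSet (x : ℕ → A) (g₀ : G) (r : ℝ) (m : ℕ) :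
    IsClosed (tailBoundSet α x g₀ r m) := by
  simp only [tailBoundSet, Set.ofPred_forall]
  exact isClosed_iInter fun n => isClosed_iInter fun _ =>
    isClosed_le ((hcont (x n)).sub continuous_const).norm continuous_const

theorem exists_tailBoundSet_mem_nhds [Group G] [IsTopologicalGroup G] [BaireSpace G]
    (hmul : ∀ g h : G, α (g * h) = (α h).trans (α g)) {x : ℕ → A}
    (hbdd : ∃ C : ℝ, ∀ n, ‖x n‖ ≤ C) {g₀ : G}
    (hx : ∀ ε > (0 : ℝ), ∃ U ∈ 𝓝 g₀, ∀ g ∈ U, limsup (fun n => ‖α g (x n) - α g₀ (x n)‖) atTop ≤ ε)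
    {r : ℝ} (hr : 0 < r) : ∃ m, tailBoundSet α x g₀ r m ∈ 𝓝 g₀ := by
  obtain ⟨U, hU, hUlimsup⟩ := hx (r / 4) (by positivity)
  have hcover : interior U ⊆ ⋃ m, tailBoundSet α x g₀ (r / 2) m := fun g hg =>
    Set.mem_iUnion.mpr <| mem_tailBoundSet_of_limsup_lt hbdd <|
      (hUlimsup g (interior_subset hg)).trans_lt (by linarith)
  obtain ⟨m, g₁, hg₁⟩ := exists_nonempty_interior_of_isOpen_subset_iUnion isOpen_interior
    ⟨g₀, mem_interior_iff_mem_nhds.mpr hU⟩ (isClosed_tailBoundSet hcont x g₀ _) hcover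
  have hW : tailBoundSet α x g₀ (r / 2) m ∈ 𝓝 (g₁ * g₀⁻¹ * g₀) := by
    rw [inv_mul_cancel_right]; exact mem_interior_iff_mem_nhds.mp hg₁
  refine ⟨m, ?_⟩
  have htranslate := (continuous_const_mul (g₁ * g₀⁻¹)).continuousAt.preimage_mem_nhds hW
  filter_upwards [htranslate] with g hg
  simpa only [mul_div_cancel₀ r two_ne_zero] using mem_tailBoundSet_of_mul_mem hmul (interior_subset hg₁) hg

theorem eventually_forall_norm_map_sub_le [Group G] [IsTopologicalGroup G] [BaireSpace G]
    (hmul : ∀ g h : G, α (g * h) = (α h).trans (α g)) {x : ℕ → A}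
    (hbdd : ∃ C : ℝ, ∀ n, ‖x n‖ ≤ C) {g₀ : G}
    (hx : ∀ ε > (0 : ℝ), ∃ U ∈ 𝓝 g₀, ∀ g ∈ U, limsup (fun n => ‖α g (x n) - α g₀ (x n)‖) atTop ≤ ε)
    {δ : ℝ} (hδ : 0 < δ) : ∀ᶠ g in 𝓝 g₀, ∀ k, ‖α g (x k) - α g₀ (x k)‖ ≤ δ := by
  obtain ⟨m, htail⟩ := exists_tailBoundSet_mem_nhds hcont hmul hbdd hx hδ
  have hhead : ∀ᶠ g in 𝓝 g₀, ∀ k ∈ Finset.range m, ‖α g (x k) - α g₀ (x k)‖ ≤ δ :=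
    (eventually_all_finset _).mpr fun k _ =>
      ((tendsto_norm_sub_self _).comp ((hcont (x k)).tendsto g₀)).eventually_le_const hδ
  filter_upwards [htail, hhead] with g hgtail hghead k
  rcases lt_or_ge k m with hk | hk
  · exact hghead k (Finset.mem_range.mpr hk)
  · exact hgtail k hk

end IsometricAction

theorem stmt2_general {G A : Type*} [Group G] [TopologicalSpace G] [IsTopologicalGroup G]
    [LocallyCompactSpace G]
    [NonUnitalCStarAlgebra A]
    (α : G → A ≃⋆ₐ[ℂ] A)
    (hmul : ∀ g h : G, α (g * h) = (α h).trans (α g))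
    (hcont : ∀ a : A, Continuous fun g => α g a)
    (x : ℕ → A) (hbdd : ∃ C : ℝ, ∀ n, ‖x n‖ ≤ C)
    (hx : ∀ g₀ : G, ∀ ε > (0 : ℝ), ∃ U ∈ nhds g₀, ∀ g ∈ U,
      Filter.limsup (fun n => ‖α g (x n) - α g₀ (x n)‖) Filter.atTop ≤ ε) :
    (∀ g₀ : G, ∀ δ > (0 : ℝ), ∃ U : Set G, IsOpen U ∧ g₀ ∈ U ∧
      ∀ k : ℕ, ∀ g ∈ U, ‖α g (x k) - α g₀ (x k)‖ ≤ δ) ∧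
    (∀ g₀ : G, Filter.Tendsto (fun g => ⨆ k : ℕ, ‖α g (x k) - α g₀ (x k)‖)
      (nhds g₀) (nhds 0)) := by
  have uniform (g₀ : G) {δ : ℝ} (hδ : 0 < δ) :=
    eventually_forall_norm_map_sub_le hcont hmul hbdd (hx g₀) hδ
  refine ⟨fun g₀ δ hδ => ?_, fun g₀ => Metric.tendsto_nhds.mpr fun ε hε => ?_⟩
  · obtain ⟨U, hU, hUopen, hg₀U⟩ := eventually_nhds_iff.mp (uniform g₀ hδ)
    exact ⟨U, hUopen, hg₀U, fun k g hg => hU g hg k⟩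
  · filter_upwards [uniform g₀ (half_pos hε)] with g hg
    have hsup_nonneg : 0 ≤ ⨆ k, ‖α g (x k) - α g₀ (x k)‖ := Real.iSup_nonneg fun _ => norm_nonneg _
    rw [Real.dist_0_eq_abs, abs_of_nonneg hsup_nonneg]
    exact (ciSup_le hg).trans_lt (half_lt_self hε)

/-- If a bounded sequence `(x_n)` in a C*-algebra with a continuous action `α` of a
second-countable locally compact group defines a continuous element of the sequence algebra,
then the continuity is automatically uniform over the whole sequence: for every `g₀` and
`δ > 0` there is an open neighbourhood `U` of `g₀` with
`sup_k sup_{g ∈ U} ‖α_g(x_k) - α_{g₀}(x_k)‖ ≤ δ`. In particular, `g ↦ (α_g(x_n))_n` is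
continuous for the supremum norm over `n`. -/
theorem stmt2 {G A : Type*} [Group G] [TopologicalSpace G] [IsTopologicalGroup G]
    [SecondCountableTopology G] [LocallyCompactSpace G]
    [NonUnitalCStarAlgebra A]
    (α : G → A ≃⋆ₐ[ℂ] A)
    (hmul : ∀ g h : G, α (g * h) = (α h).trans (α g))
    (hcont : ∀ a : A, Continuous fun g => α g a)
    (x : ℕ → A) (hbdd : ∃ C : ℝ, ∀ n, ‖x n‖ ≤ C)
    (hx : ∀ g₀ : G, ∀ ε > (0 : ℝ), ∃ U ∈ nhds g₀, ∀ g ∈ U,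
      Filter.limsup (fun n => ‖α g (x n) - α g₀ (x n)‖) Filter.atTop ≤ ε) :
    (∀ g₀ : G, ∀ δ > (0 : ℝ), ∃ U : Set G, IsOpen U ∧ g₀ ∈ U ∧
      ∀ k : ℕ, ∀ g ∈ U, ‖α g (x k) - α g₀ (x k)‖ ≤ δ) ∧
    (∀ g₀ : G, Filter.Tendsto (fun g => ⨆ k : ℕ, ‖α g (x k) - α g₀ (x k)‖)
      (nhds g₀) (nhds 0)) :=
  stmt2_general α hmul hcont x hbdd hx
end

section
/- Let A be a σ-unital C*-algebra and J ⊆ A a closed two-sided ideal. Let (h_n)_{n∈ℕ} be a sequence of positive contractions in J which is an approximate unit for J (i.e., ‖x − h_n x‖ → 0 for all x ∈ J) and which is quasicentral relative to A (i.e., ‖h_n a − a h_n‖ → 0 for all a ∈ A). Let (a_n)_{n∈ℕ} be a sequence of positive contractions in A such that their images form an approximate unit of A/J, i.e., the distance dist(b − a_n b, J) → 0 for every b ∈ A. Then there is a strictly increasing sequence n_1 < n_2 < … of natural numbers such that the sequence e_k := h_{n_k} + (1 − h_{n_k})^{1/2} a_k (1 − h_{n_k})^{1/2} is an approximate unit for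 A, i.e., ‖b − e_k b‖ → 0 for every b ∈ A. Here (1 − h)^{1/2} a (1 − h)^{1/2} is computed in the minimal unitization of A; equivalently, e_k = h_{n_k} + a_k − s_k a_k − a_k s_k + s_k a_k s_k ∈ A, where s_k := f(h_{n_k}) ∈ A is obtained by applying the continuous functional calculus with the function f(t) = 1 − √(1 − t) (which vanishes at 0) to the positive contraction h_{n_k}. -/
open Filter Topology

/-! With `G = (1 - h)^{1/2}` in the unitization, `1 - e = G (1 - a) G`, so `‖1 - e‖ ≤ 1` and it
suffices that `e_k` becomes a left unit for each member `u_m` of a countable approximate unit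
of `A`. Up to the commutator `[G, u_m]`, which is small by quasicentrality (transported from `h`
to `G` by polynomial approximation), `u_m - e u_m = G (1 - a) G u_m` is `G (1 - a) u_m G`;
replacing `(1 - a) u_m` by a nearby `j ∈ J` leaves `‖G j‖² ≤ ‖j‖ ‖j - h j‖`, which is small for
`h = h_n` with `n` large. Hence `‖u_m - e u_m‖` is eventually below `dist((1 - a_k) u_m, J) + ε`,
and a diagonal choice of `n_k` makes it tend to zero for every `m`. -/

section NormedRing

open Polynomial

variable {B : Type*} [NormedRing B]

lemma norm_mul_le_of_norm_le_one_left {G : B} (hG : ‖G‖ ≤ 1) (z : B) : ‖G * z‖ ≤ ‖z‖ :=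
  (norm_mul_le _ _).trans (mul_le_of_le_one_left (norm_nonneg _) hG)

lemma norm_mul_le_of_norm_le_one_right {G : B} (hG : ‖G‖ ≤ 1) (z : B) : ‖z * G‖ ≤ ‖z‖ :=
  (norm_mul_le _ _).trans (mul_le_of_le_one_right (norm_nonneg _) hG)

lemma norm_pow_mul_le_of_norm_le_one {x : B} (hx : ‖x‖ ≤ 1) (z : B) (i : ℕ) :
    ‖x ^ i * z‖ ≤ ‖z‖ := by
  induction i with
  | zero => rw [pow_zero, one_mul]
  | succ i ih => exact (pow_succ' x i ▸ mul_assoc x (x ^ i) z ▸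
      norm_mul_le_of_norm_le_one_left hx _).trans ih

lemma norm_pow_mul_sub_mul_pow_le {x : B} (hx : ‖x‖ ≤ 1) (b : B) (i : ℕ) :
    ‖x ^ i * b - b * x ^ i‖ ≤ i * ‖x * b - b * x‖ := by
  induction i with
  | zero => simp
  | succ i ih =>
    calc ‖x ^ (i + 1) * b - b * x ^ (i + 1)‖
        = ‖x ^ i * (x * b - b * x) + (x ^ i * b - b * x ^ i) * x‖ := by
          rw [pow_succ]; noncomm_ring
      _ ≤ ‖x * b - b * x‖ + i * ‖x * b - b * x‖ :=
          (norm_add_le _ _).trans <| add_le_add (norm_pow_mul_le_of_norm_le_one hx _ i)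
            ((norm_mul_le_of_norm_le_one_right hx _).trans ih)
      _ = (i + 1 : ℕ) * ‖x * b - b * x‖ := by push_cast; ring

lemma exists_norm_aeval_mul_sub_mul_aeval_le [NormedAlgebra ℝ B] (p : ℝ[X]) :
    ∃ C, ∀ x b : B, ‖x‖ ≤ 1 → ‖aeval x p * b - b * aeval x p‖ ≤ C * ‖x * b - b * x‖ := by
  refine ⟨∑ i ∈ Finset.range (p.natDegree + 1), ‖p.coeff i‖ * i, fun x b hx => ?_⟩
  calc ‖aeval x p * b - b * aeval x p‖
      = ‖∑ i ∈ Finset.range (p.natDegree + 1), p.coeff i • (x ^ i * b - b * x ^ i)‖ := by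
        simp only [aeval_eq_sum_range, Finset.sum_mul, Finset.mul_sum, smul_mul_assoc,
          mul_smul_comm, smul_sub, Finset.sum_sub_distrib]
    _ ≤ ∑ i ∈ Finset.range (p.natDegree + 1), ‖p.coeff i‖ * (i * ‖x * b - b * x‖) :=
        (norm_sum_le _ _).trans <| Finset.sum_le_sum fun i _ =>
          (norm_smul_le _ _).trans (by gcongr; exact norm_pow_mul_sub_mul_pow_le hx b i)
    _ = _ := by simp only [Finset.sum_mul, mul_assoc]

lemma norm_sub_mul_le_of_norm_one_sub_le {e : B} (he : ‖1 - e‖ ≤ 1) (b w : B) :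
    ‖b - e * b‖ ≤ ‖b - w * b‖ + ‖w - e * w‖ * ‖b‖ :=
  calc ‖b - e * b‖ = ‖(1 - e) * (b - w * b) + (w - e * w) * b‖ := by noncomm_ring
    _ ≤ ‖b - w * b‖ + ‖w - e * w‖ * ‖b‖ :=
      (norm_add_le _ _).trans <| add_le_add (norm_mul_le_of_norm_le_one_left he _) (norm_mul_le _ _)

lemma norm_mul_mul_mul_le {G Y : B} (hG : ‖G‖ ≤ 1) (hY : ‖Y‖ ≤ 1) (b j : B) :
    ‖G * Y * G * b‖ ≤ ‖Y * b - j‖ + ‖G * j‖ + ‖G * b - b * G‖ := by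
  have hGl := norm_mul_le_of_norm_le_one_left hG
  have hGr := norm_mul_le_of_norm_le_one_right hG
  calc ‖G * Y * G * b‖ = ‖G * (Y * b - j) * G + G * j * G + G * (Y * (G * b - b * G))‖ := by
        noncomm_ring
    _ ≤ ‖Y * b - j‖ + ‖G * j‖ + ‖G * b - b * G‖ :=
      (norm_add₃_le ..).trans <| add_le_add_three ((hGr _).trans (hGl _)) (hGr _)
        ((hGl _).trans (norm_mul_le_of_norm_le_one_left hY _))

lemma norm_mul_le_sqrt_of_mul_self_eq_one_sub [StarRing B] [CStarRing B] {G x : B}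
    (hG : IsSelfAdjoint G) (hGG : G * G = 1 - x) (j : B) :
    ‖G * j‖ ≤ √(‖j‖ * ‖j - x * j‖) := by
  rw [← Real.sqrt_mul_self (norm_nonneg (G * j)), ← CStarRing.norm_star_mul_self]
  gcongr
  calc ‖star (G * j) * (G * j)‖ = ‖star j * (j - x * j)‖ := by
        rw [star_mul, hG.star_eq, mul_assoc, ← mul_assoc G, hGG, sub_mul, one_mul]
    _ ≤ ‖j‖ * ‖j - x * j‖ := (norm_mul_le _ _).trans_eq (by rw [norm_star])

end NormedRing

section CStarAlgebra

open Polynomial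

variable {B : Type*} [CStarAlgebra B]

lemma exists_norm_cfc_mul_sub_mul_cfc_le {f : ℝ → ℝ} (hf : ContinuousOn f (Set.Icc 0 1))
    {δ : ℝ} (hδ : 0 < δ) :
    ∃ C, ∀ x b : B, IsSelfAdjoint x → spectrum ℝ x ⊆ Set.Icc 0 1 → ‖x‖ ≤ 1 →
      ‖cfc f x * b - b * cfc f x‖ ≤ 2 * δ * ‖b‖ + C * ‖x * b - b * x‖ := by
  obtain ⟨p, hp⟩ := exists_polynomial_near_of_continuousOn 0 1 f hf δ hδ
  obtain ⟨C, hC⟩ := exists_norm_aeval_mul_sub_mul_aeval_le (B := B) p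
  refine ⟨C, fun x b hx hsp hx1 => ?_⟩
  have hfp : ‖cfc f x - aeval x p‖ ≤ δ := by
    rw [← cfc_polynomial p x, ← cfc_sub f _ x (hf.mono hsp) p.continuous.continuousOn]
    refine norm_cfc_le hδ.le fun t ht => ?_
    rw [Real.norm_eq_abs, abs_sub_comm]
    exact (hp t (hsp ht)).le
  calc ‖cfc f x * b - b * cfc f x‖
      = ‖(cfc f x - aeval x p) * b - b * (cfc f x - aeval x p)
          + (aeval x p * b - b * aeval x p)‖ := by noncomm_ring
    _ ≤ ‖cfc f x - aeval x p‖ * ‖b‖ + ‖b‖ * ‖cfc f x - aeval x p‖ + C * ‖x * b - b * x‖ :=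
        (norm_add_le _ _).trans <| add_le_add
          ((norm_sub_le _ _).trans (add_le_add (norm_mul_le _ _) (norm_mul_le _ _))) (hC x b hx1)
    _ ≤ 2 * δ * ‖b‖ + C * ‖x * b - b * x‖ := by nlinarith [norm_nonneg b]

lemma tendsto_norm_cfc_mul_sub_mul_cfc {f : ℝ → ℝ} (hf : ContinuousOn f (Set.Icc 0 1))
    {x : ℕ → B} (hx : ∀ n, IsSelfAdjoint (x n)) (hsp : ∀ n, spectrum ℝ (x n) ⊆ Set.Icc 0 1)
    (hx1 : ∀ n, ‖x n‖ ≤ 1) {b : B} (hxb : Tendsto (fun n => ‖x n * b - b * x n‖) atTop (𝓝 0)) :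
    Tendsto (fun n => ‖cfc f (x n) * b - b * cfc f (x n)‖) atTop (𝓝 0) := by
  refine Metric.tendsto_atTop.2 fun ε hε => ?_
  set δ := ε / (4 * (‖b‖ + 1)) with hδ
  have hδb : 2 * δ * ‖b‖ ≤ ε / 2 := by
    have : ‖b‖ / (‖b‖ + 1) ≤ 1 := div_le_one_of_le₀ (by linarith) (by positivity)
    calc 2 * δ * ‖b‖ = ε / 2 * (‖b‖ / (‖b‖ + 1)) := by rw [hδ]; field_simp; ring
      _ ≤ ε / 2 := mul_le_of_le_one_right (by positivity) this
  obtain ⟨C, hC⟩ := exists_norm_cfc_mul_sub_mul_cfc_le (B := B) hf (show 0 < δ by positivity)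
  obtain ⟨N, hN⟩ := eventually_atTop.1 <|
    (hxb.const_mul C).eventually_lt_const (show C * 0 < ε / 2 by linarith)
  refine ⟨N, fun n hn => ?_⟩
  rw [dist_zero_right, norm_norm]
  linarith [hC (x n) b (hx n) (hsp n) (hx1 n), hN n hn]

end CStarAlgebra

section ApproximateUnit

lemma exists_strictMono_tendsto_zero_of_eventually_lt {c : ℕ → ℕ → ℕ → ℝ} {d : ℕ → ℕ → ℝ}
    (hc0 : ∀ m k n, 0 ≤ c m k n) (hd : ∀ m, Tendsto (d m) atTop (𝓝 0))
    (hc : ∀ m k ε, 0 < ε → ∀ᶠ n in atTop, c m k n < d m k + ε) :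
    ∃ φ : ℕ → ℕ, StrictMono φ ∧ ∀ m, Tendsto (fun k => c m k (φ k)) atTop (𝓝 0) := by
  have hk : ∀ k, ∀ᶠ n in atTop, ∀ m ∈ Set.Iic k, c m k n < d m k + 1 / (k + 1) := fun k =>
    (Set.finite_Iic k).eventually_all.2 fun m _ => hc m k _ Nat.one_div_pos_of_nat
  obtain ⟨φ, hφ, hφc⟩ := extraction_forall_of_eventually hk
  refine ⟨φ, hφ, fun m => squeeze_zero' (Eventually.of_forall fun k => hc0 m k (φ k))
    ((eventually_ge_atTop m).mono fun k hmk => (hφc k m hmk).le) ?_⟩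
  simpa using (hd m).add tendsto_one_div_add_atTop_nhds_zero_nat

lemma tendsto_norm_sub_mul_of_forall_tendsto {A : Type*} [NonUnitalNormedRing A] {e u : ℕ → A}
    (hu : ∀ b, Tendsto (fun m => ‖b - u m * b‖) atTop (𝓝 0))
    (he : ∀ k b w, ‖b - e k * b‖ ≤ ‖b - w * b‖ + ‖w - e k * w‖ * ‖b‖)
    (hue : ∀ m, Tendsto (fun k => ‖u m - e k * u m‖) atTop (𝓝 0)) (b : A) :
    Tendsto (fun k => ‖b - e k * b‖) atTop (𝓝 0) := by
  refine Metric.tendsto_atTop.2 fun ε hε => ?_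
  obtain ⟨m, hm⟩ := ((hu b).eventually_lt_const (half_pos hε)).exists
  obtain ⟨K, hK⟩ := eventually_atTop.1 <|
    ((hue m).mul_const ‖b‖).eventually_lt_const (show 0 * ‖b‖ < ε / 2 by linarith)
  refine ⟨K, fun k hk => ?_⟩
  rw [dist_zero_right, norm_norm]
  linarith [he k b (u m), hK k hk]

end ApproximateUnit

section Unitization

variable {A : Type*} [NonUnitalCStarAlgebra A]

/-- `x + (1 - x)^{1/2} y (1 - x)^{1/2}`, expanded inside `A`. -/
noncomputable def sandwichAdd (x y : A) : A :=
  x + y - cfcₙ (fun t : ℝ => 1 - √(1 - t)) x * y - y * cfcₙ (fun t : ℝ => 1 - √(1 - t)) x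
    + cfcₙ (fun t : ℝ => 1 - √(1 - t)) x * y * cfcₙ (fun t : ℝ => 1 - √(1 - t)) x

noncomputable def sqrtOneSub (x : A) : Unitization ℂ A :=
  cfc (fun t : ℝ => √(1 - t)) (x : Unitization ℂ A)

lemma inr_cfcₙ_eq_one_sub_sqrtOneSub {x : A} (hx : IsSelfAdjoint x) :
    ((cfcₙ (fun t : ℝ => 1 - √(1 - t)) x : A) : Unitization ℂ A) = 1 - sqrtOneSub x := by
  have : IsSelfAdjoint (x : Unitization ℂ A) := Unitization.isSelfAdjoint_inr.mpr hx
  rw [Unitization.real_cfcₙ_eq_cfc_inr x _ (by simp), sqrtOneSub, cfc_sub ..,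
    cfc_const_one ℝ (x : Unitization ℂ A)]

variable [PartialOrder A] [StarOrderedRing A] {x y : A}

lemma spectrum_inr_subset_Icc (hx0 : 0 ≤ x) (hx1 : ‖x‖ ≤ 1) :
    spectrum ℝ (x : Unitization ℂ A) ⊆ Set.Icc 0 1 := fun t ht =>
  ⟨spectrum_nonneg_of_nonneg (Unitization.inr_nonneg_iff.mpr hx0) ht,
    (le_abs_self t).trans <| (spectrum.norm_le_norm_of_mem ht).trans_eq (Unitization.norm_inr x)
      |>.trans hx1⟩

lemma norm_one_sub_inr_le_one (hy0 : 0 ≤ y) (hy1 : ‖y‖ ≤ 1) :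
    ‖1 - (y : Unitization ℂ A)‖ ≤ 1 := by
  obtain ⟨hY0, hY1⟩ := CStarAlgebra.inr_mem_Icc_iff_norm_le.mpr ⟨hy0, hy1⟩
  exact (CStarAlgebra.norm_le_one_iff_of_nonneg _ (sub_nonneg.mpr hY1)).mpr (sub_le_self 1 hY0)

lemma norm_sqrtOneSub_le_one (hx0 : 0 ≤ x) (hx1 : ‖x‖ ≤ 1) : ‖sqrtOneSub x‖ ≤ 1 := by
  refine norm_cfc_le zero_le_one fun t ht => ?_
  rw [Real.norm_eq_abs, abs_of_nonneg (Real.sqrt_nonneg _), Real.sqrt_le_one]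
  linarith [(spectrum_inr_subset_Icc hx0 hx1 ht).1]

lemma sqrtOneSub_mul_self (hx0 : 0 ≤ x) (hx1 : ‖x‖ ≤ 1) :
    sqrtOneSub x * sqrtOneSub x = 1 - (x : Unitization ℂ A) := by
  rw [sqrtOneSub, ← cfc_mul _ _ _ (by fun_prop) (by fun_prop)]
  have hx : IsSelfAdjoint (x : Unitization ℂ A) :=
    .of_nonneg (Unitization.inr_nonneg_iff.mpr hx0)
  rw [cfc_congr (g := fun t : ℝ => 1 - t) fun t ht =>
      Real.mul_self_sqrt (by linarith [(spectrum_inr_subset_Icc hx0 hx1 ht).2]),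
    cfc_sub _ _ _ (by fun_prop) (by fun_prop), cfc_const 1 _, map_one, cfc_id' ℝ _]

lemma one_sub_inr_sandwichAdd (hx0 : 0 ≤ x) (hx1 : ‖x‖ ≤ 1) (y : A) :
    1 - ((sandwichAdd x y : A) : Unitization ℂ A)
      = sqrtOneSub x * (1 - (y : Unitization ℂ A)) * sqrtOneSub x := by
  have hx : (x : Unitization ℂ A) = 1 - sqrtOneSub x * sqrtOneSub x := by
    rw [sqrtOneSub_mul_self hx0 hx1, sub_sub_cancel]
  simp only [sandwichAdd, Unitization.inr_add, Unitization.inr_sub, Unitization.inr_mul,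
    inr_cfcₙ_eq_one_sub_sqrtOneSub (.of_nonneg hx0)]
  rw [hx]
  noncomm_ring

lemma norm_sub_sandwichAdd_mul_le (hx0 : 0 ≤ x) (hx1 : ‖x‖ ≤ 1) (hy0 : 0 ≤ y) (hy1 : ‖y‖ ≤ 1)
    (b w : A) :
    ‖b - sandwichAdd x y * b‖ ≤ ‖b - w * b‖ + ‖w - sandwichAdd x y * w‖ * ‖b‖ := by
  have hE : ‖1 - ((sandwichAdd x y : A) : Unitization ℂ A)‖ ≤ 1 := by
    rw [one_sub_inr_sandwichAdd hx0 hx1]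
    have hG := norm_sqrtOneSub_le_one hx0 hx1
    exact (norm_mul_le_of_norm_le_one_right hG _).trans
      ((norm_mul_le_of_norm_le_one_left hG _).trans (norm_one_sub_inr_le_one hy0 hy1))
  simpa only [← Unitization.inr_mul, ← Unitization.inr_sub, Unitization.norm_inr] using
    norm_sub_mul_le_of_norm_one_sub_le hE (b : Unitization ℂ A) w

lemma norm_sub_sandwichAdd_mul_le_add_sqrt (hx0 : 0 ≤ x) (hx1 : ‖x‖ ≤ 1) (hy0 : 0 ≤ y)
    (hy1 : ‖y‖ ≤ 1) (b j : A) :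
    ‖b - sandwichAdd x y * b‖ ≤ ‖b - y * b - j‖ + √(‖j‖ * ‖j - x * j‖)
      + ‖sqrtOneSub x * b - b * sqrtOneSub x‖ := by
  have hGj : ‖sqrtOneSub x * j‖ ≤ √(‖j‖ * ‖j - x * j‖) := by
    simpa only [← Unitization.inr_mul, ← Unitization.inr_sub, Unitization.norm_inr] using
      norm_mul_le_sqrt_of_mul_self_eq_one_sub (G := sqrtOneSub x) (cfc_predicate _ _)
        (sqrtOneSub_mul_self hx0 hx1) (j : Unitization ℂ A)
  have hYb : (1 - (y : Unitization ℂ A)) * b - j = ((b - y * b - j : A) : Unitization ℂ A) := by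
    push_cast
    noncomm_ring
  calc ‖b - sandwichAdd x y * b‖
      = ‖sqrtOneSub x * (1 - (y : Unitization ℂ A)) * sqrtOneSub x * b‖ := by
        rw [← one_sub_inr_sandwichAdd hx0 hx1, ← Unitization.norm_inr (𝕜 := ℂ)]
        push_cast
        noncomm_ring
    _ ≤ _ := by
      have := norm_mul_mul_mul_le (norm_sqrtOneSub_le_one hx0 hx1)
        (norm_one_sub_inr_le_one hy0 hy1) (b : Unitization ℂ A) j
      rw [hYb, Unitization.norm_inr] at this
      linarith

lemma tendsto_norm_sqrtOneSub_mul_sub_mul {h : ℕ → A} (hh0 : ∀ n, 0 ≤ h n)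
    (hh1 : ∀ n, ‖h n‖ ≤ 1) {b : A} (hb : Tendsto (fun n => ‖h n * b - b * h n‖) atTop (𝓝 0)) :
    Tendsto (fun n => ‖sqrtOneSub (h n) * b - b * sqrtOneSub (h n)‖) atTop (𝓝 0) :=
  tendsto_norm_cfc_mul_sub_mul_cfc (by fun_prop)
    (fun n => .of_nonneg (Unitization.inr_nonneg_iff.mpr (hh0 n)))
    (fun n => spectrum_inr_subset_Icc (hh0 n) (hh1 n))
    (fun n => (Unitization.norm_inr (h n)).trans_le (hh1 n))
    (by simpa only [← Unitization.inr_mul, ← Unitization.inr_sub, Unitization.norm_inr] using hb)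

lemma eventually_norm_sub_sandwichAdd_mul_lt {h : ℕ → A} (hh0 : ∀ n, 0 ≤ h n)
    (hh1 : ∀ n, ‖h n‖ ≤ 1) {S : Set A} (hS : S.Nonempty)
    (happrox : ∀ j ∈ S, Tendsto (fun n => ‖j - h n * j‖) atTop (𝓝 0)) (hy0 : 0 ≤ y)
    (hy1 : ‖y‖ ≤ 1) {b : A} (hb : Tendsto (fun n => ‖h n * b - b * h n‖) atTop (𝓝 0))
    {ε : ℝ} (hε : 0 < ε) :
    ∀ᶠ n in atTop, ‖b - sandwichAdd (h n) y * b‖ < Metric.infDist (b - y * b) S + ε := by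
  obtain ⟨j, hjS, hj⟩ := (Metric.infDist_lt_iff hS).1
    (show Metric.infDist (b - y * b) S < Metric.infDist (b - y * b) S + ε / 3 by linarith)
  have hsqrt : Tendsto (fun n => √(‖j‖ * ‖j - h n * j‖)) atTop (𝓝 0) := by
    simpa using ((happrox j hjS).const_mul ‖j‖).sqrt
  filter_upwards [hsqrt.eventually_lt_const (by positivity : (0 : ℝ) < ε / 3),
    (tendsto_norm_sqrtOneSub_mul_sub_mul hh0 hh1 hb).eventually_lt_const
      (by positivity : (0 : ℝ) < ε / 3)] with n hjn hbn
  rw [dist_eq_norm] at hj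
  linarith [norm_sub_sandwichAdd_mul_le_add_sqrt (hh0 n) (hh1 n) hy0 hy1 b j]

end Unitization

theorem stmt7_general {A : Type*} [NonUnitalCStarAlgebra A] [PartialOrder A] [StarOrderedRing A]
    (hσunital : ∃ u : ℕ → A, (∀ m, 0 ≤ u m ∧ ‖u m‖ ≤ 1) ∧
      ∀ a : A, Filter.Tendsto (fun m => ‖a - u m * a‖) Filter.atTop (nhds 0))
    (J : TwoSidedIdeal A)
    (h : ℕ → A) (hhJ : ∀ n, h n ∈ J ∧ 0 ≤ h n ∧ ‖h n‖ ≤ 1)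
    (happrox : ∀ x ∈ J, Filter.Tendsto (fun n => ‖x - h n * x‖) Filter.atTop (nhds 0))
    (hqc : ∀ a : A, Filter.Tendsto (fun n => ‖h n * a - a * h n‖) Filter.atTop (nhds 0))
    (a : ℕ → A) (ha : ∀ n, 0 ≤ a n ∧ ‖a n‖ ≤ 1)
    (haJ : ∀ b : A, Filter.Tendsto (fun n => Metric.infDist (b - a n * b) (J : Set A))
      Filter.atTop (nhds 0)) :
    ∃ n : ℕ → ℕ, StrictMono n ∧
      ∀ b : A, Filter.Tendsto (fun k =>
        ‖b - (h (n k) + a k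
            - cfcₙ (fun t : ℝ => 1 - Real.sqrt (1 - t)) (h (n k)) * a k
            - a k * cfcₙ (fun t : ℝ => 1 - Real.sqrt (1 - t)) (h (n k))
            + cfcₙ (fun t : ℝ => 1 - Real.sqrt (1 - t)) (h (n k)) * a k
              * cfcₙ (fun t : ℝ => 1 - Real.sqrt (1 - t)) (h (n k))) * b‖)
        Filter.atTop (nhds 0) := by
  obtain ⟨u, -, hu⟩ := hσunital
  have hh0 n := (hhJ n).2.1
  have hh1 n := (hhJ n).2.2
  obtain ⟨φ, hφ, hlim⟩ := exists_strictMono_tendsto_zero_of_eventually_lt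
    (c := fun m k n => ‖u m - sandwichAdd (h n) (a k) * u m‖) (fun _ _ _ => norm_nonneg _)
    (fun m => haJ (u m)) fun m k _ hε => eventually_norm_sub_sandwichAdd_mul_lt hh0 hh1
      ⟨0, J.zero_mem⟩ happrox (ha k).1 (ha k).2 (hqc (u m)) hε
  exact ⟨φ, hφ, tendsto_norm_sub_mul_of_forall_tendsto hu
    (fun k => norm_sub_sandwichAdd_mul_le (hh0 (φ k)) (hh1 (φ k)) (ha k).1 (ha k).2) hlim⟩

/-- Combining a quasicentral approximate unit of an ideal `J ⊆ A` with a lift of an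
approximate unit of `A/J` produces an approximate unit of `A`: for a suitable subsequence
`n₁ < n₂ < …`, the elements `e_k = h_{n_k} + (1 - h_{n_k})^{1/2} a_k (1 - h_{n_k})^{1/2}`,
written out in `A` via the non-unital continuous functional calculus element
`s_k = f(h_{n_k})` with `f t = 1 - √(1 - t)`, form an approximate unit for `A`. -/
theorem stmt7 {A : Type*} [NonUnitalCStarAlgebra A] [PartialOrder A] [StarOrderedRing A]
    (hσunital : ∃ u : ℕ → A, (∀ m, 0 ≤ u m ∧ ‖u m‖ ≤ 1) ∧
      ∀ a : A, Filter.Tendsto (fun m => ‖a - u m * a‖) Filter.atTop (nhds 0))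
    (J : TwoSidedIdeal A) (hJclosed : IsClosed (J : Set A))
    (h : ℕ → A) (hhJ : ∀ n, h n ∈ J ∧ 0 ≤ h n ∧ ‖h n‖ ≤ 1)
    (happrox : ∀ x ∈ J, Filter.Tendsto (fun n => ‖x - h n * x‖) Filter.atTop (nhds 0))
    (hqc : ∀ a : A, Filter.Tendsto (fun n => ‖h n * a - a * h n‖) Filter.atTop (nhds 0))
    (a : ℕ → A) (ha : ∀ n, 0 ≤ a n ∧ ‖a n‖ ≤ 1)
    (haJ : ∀ b : A, Filter.Tendsto (fun n => Metric.infDist (b - a n * b) (J : Set A))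
      Filter.atTop (nhds 0)) :
    ∃ n : ℕ → ℕ, StrictMono n ∧
      ∀ b : A, Filter.Tendsto (fun k =>
        ‖b - (h (n k) + a k
            - cfcₙ (fun t : ℝ => 1 - Real.sqrt (1 - t)) (h (n k)) * a k
            - a k * cfcₙ (fun t : ℝ => 1 - Real.sqrt (1 - t)) (h (n k))
            + cfcₙ (fun t : ℝ => 1 - Real.sqrt (1 - t)) (h (n k)) * a k
              * cfcₙ (fun t : ℝ => 1 - Real.sqrt (1 - t)) (h (n k))) * b‖)
        Filter.atTop (nhds 0) :=
  stmt7_general hσunital J h hhJ happrox hqc a ha haJ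
end

section
/- Let G be a second-countable, locally compact group, A a unital C*-algebra, α a continuous action of G on A by *-automorphisms, ε > 0, and K ⊆ G a compact set. Let (u_n)_n be a sequence of unitaries in A, and suppose there exist norm-continuous paths w_n : [0,1] → U(A) with w_n(0) = 1 such that ‖w_n(1) − u_n‖ → 0 as n → ∞, the family of maps (t,g) ↦ α_g(w_n(t)) from [0,1] × G to A, indexed by n ∈ ℕ, is equicontinuous, and limsup_{n→∞} ‖α_g(w_n(t)) − w_n(t)‖ ≤ ε for every t ∈ [0,1] and g ∈ K. Then there exists a sequence δ_n of nonnegative reals with δ_n → 0 such that for all sufficiently large n one has u_n ∈ U₀(A^α_{ε+δ_n,K}), i.e., there is a norm-continuous path v_n : [0,1] → U(A) with v_n(0) = 1, v_n(1) = u_n, and ‖α_g(v_n(t)) − v_n(t)‖ ≤ ε + δ_n for all t ∈ [0,1] and g ∈ K. -/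
/-!
The functions `(t, g) ↦ ‖α_g(w_n t) - w_n t‖` form an equicontinuous family (each `α_g` is
isometric), so on the compact set `[0,1] × K` the pointwise bound `limsup ≤ ε` improves, by a
finite subcover, to a uniform bound `ε + δ_n` with `δ_n → 0`. Once `‖w_n(1) - u_n‖ < 2`, the
unitaries `w_n(1)` and `u_n` are joined by the exponential path inside the ball of radius
`‖w_n(1) - u_n‖`, along which `‖α_g(x) - x‖` grows by at most `2‖w_n(1) - u_n‖`; appending it
to `w_n` gives the required path.
-/

open Filter Topology

open Set

lemma norm_map_sub_self_le {E F : Type*} [SeminormedAddCommGroup E] [FunLike F E E]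
    [AddMonoidHomClass F E E] (β : F) (hβ : ∀ x, ‖β x‖ = ‖x‖) (x y : E) :
    ‖β x - x‖ ≤ ‖β y - y‖ + 2 * ‖x - y‖ :=
  calc ‖β x - x‖ = ‖(β y - y) + (β (x - y) - (x - y))‖ := by rw [map_sub]; abel_nf
    _ ≤ ‖β y - y‖ + (‖β (x - y)‖ + ‖x - y‖) :=
        (norm_add_le _ _).trans (by gcongr; exact norm_sub_le _ _)
    _ = ‖β y - y‖ + 2 * ‖x - y‖ := by rw [hβ]; ring

lemma Equicontinuous.norm_apply_sub_of_isometry {ι X Y E : Type*} [TopologicalSpace X]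
    [TopologicalSpace Y] [SeminormedAddCommGroup E] {β : Y → E → E} (hβ : ∀ y, Isometry (β y))
    {f : ι → X → E} (h : Equicontinuous fun i (p : X × Y) => β p.2 (f i p.1)) :
    Equicontinuous fun i (p : X × Y) => ‖β p.2 (f i p.1) - f i p.1‖ := by
  intro q
  rw [Metric.equicontinuousAt_iff_right]
  intro η hη
  have hnear := Metric.equicontinuousAt_iff_right.1 (h q) (η / 2) (half_pos hη)
  -- `β q.2` is an isometry, so equicontinuity in the first variable alone controls `f i`
  have hnear_fst : ∀ᶠ p in 𝓝 q, ∀ i, dist (β q.2 (f i q.1)) (β q.2 (f i p.1)) < η / 2 :=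
    ((continuous_fst.prodMk continuous_const).tendsto' q q rfl).eventually hnear
  filter_upwards [hnear, hnear_fst] with p hp hp_fst i
  calc dist ‖β q.2 (f i q.1) - f i q.1‖ ‖β p.2 (f i p.1) - f i p.1‖
      ≤ dist (β q.2 (f i q.1) - f i q.1) (β p.2 (f i p.1) - f i p.1) :=
        (dist_norm_norm_le _ _).trans_eq (dist_eq_norm _ _).symm
    _ ≤ dist (β q.2 (f i q.1)) (β p.2 (f i p.1)) + dist (f i q.1) (f i p.1) :=
        dist_sub_sub_le _ _ _ _
    _ < η / 2 + η / 2 := add_lt_add (hp i) ((hβ q.2).dist_eq _ _ ▸ hp_fst i)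
    _ = η := add_halves η

lemma Equicontinuous.eventually_forall_le_of_limsup_le {ι X : Type*} [TopologicalSpace X]
    {F : ι → X → ℝ} (hF : Equicontinuous F) {l : Filter ι} {S : Set X} (hS : IsCompact S)
    {c : ℝ} (hbdd : ∀ x ∈ S, IsBoundedUnder (· ≤ ·) l fun i => F i x)
    (hlim : ∀ x ∈ S, limsup (fun i => F i x) l ≤ c) {η : ℝ} (hη : 0 < η) :
    ∀ᶠ i in l, ∀ x ∈ S, F i x ≤ c + η := by
  have hnear : ∀ x, {y | ∀ i, F i y < F i x + η / 2} ∈ 𝓝 x := fun x => by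
    filter_upwards [Metric.equicontinuousAt_iff_right.1 (hF x) (η / 2) (half_pos hη)] with y hy i
    linarith [le_abs_self (F i y - F i x), (Real.dist_eq _ _ ▸ dist_comm (F i x) (F i y) ▸ hy i)]
  obtain ⟨T, hTS, hST⟩ := hS.elim_nhds_subcover _ fun x _ => hnear x
  have hT : ∀ᶠ i in l, ∀ x ∈ T, F i x < c + η / 2 :=
    (eventually_all_finset T).2 fun x hx =>
      eventually_lt_of_limsup_lt ((hlim x (hTS x hx)).trans_lt (by linarith)) (hbdd x (hTS x hx))
  filter_upwards [hT] with i hi y hy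
  obtain ⟨x, hxT, hyx⟩ := mem_iUnion₂.1 (hST hy)
  linarith [hyx i, hi x hxT]

lemma exists_tendsto_zero_forall_le_add {ι X : Type*} {F : ι → X → ℝ} {l : Filter ι}
    {S : Set X} {c : ℝ} (hbdd : ∀ i, BddAbove (F i '' S))
    (h : ∀ η > 0, ∀ᶠ i in l, ∀ x ∈ S, F i x ≤ c + η) :
    ∃ δ : ι → ℝ, (∀ i, 0 ≤ δ i) ∧ Tendsto δ l (𝓝 0) ∧ ∀ i, ∀ x ∈ S, F i x ≤ c + δ i := by
  refine ⟨fun i => ⨆ x : S, max (F i x - c) 0,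
    fun i => Real.iSup_nonneg fun _ => le_max_right _ _, ?_, fun i x hx => ?_⟩
  · refine tendsto_order.2 ⟨fun a ha => Eventually.of_forall fun i =>
      ha.trans_le (Real.iSup_nonneg fun _ => le_max_right _ _), fun a ha => ?_⟩
    filter_upwards [h (a / 2) (half_pos ha)] with i hi
    refine (Real.iSup_le (fun x => max_le ?_ (half_pos ha).le) (half_pos ha).le).trans_lt
      (half_lt_self ha)
    linarith [hi x x.2]
  · obtain ⟨B, hB⟩ := hbdd i
    have hle : max (F i x - c) 0 ≤ ⨆ y : S, max (F i y - c) 0 :=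
      le_ciSup (f := fun y : S => max (F i y - c) 0)
        ⟨max (B - c) 0, by
          rintro _ ⟨y, rfl⟩
          exact max_le_max_right _ (by linarith [hB (mem_image_of_mem _ y.2)])⟩ ⟨x, hx⟩
    linarith [le_max_left (F i x - c) 0]

lemma Unitary.norm_path_sub_le {A : Type*} [CStarAlgebra A] (u v : unitary A)
    (huv : ‖(v - u : A)‖ < 2) (t : unitInterval) :
    ‖(Unitary.path u v huv t - u : A)‖ ≤ ‖(v - u : A)‖ := by
  have hvu : ‖((v * star u : unitary A) - 1 : A)‖ < 2 := Unitary.norm_sub_eq v u ▸ huv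
  calc ‖(Unitary.path u v huv t - u : A)‖
      = ‖(selfAdjoint.expUnitary ((t : ℝ) • Unitary.argSelfAdjoint (v * star u)) - 1 : A)‖ := by
        rw [Unitary.path_apply, Submonoid.coe_mul, ← sub_one_mul,
          CStarRing.norm_mul_mem_unitary _ u.2]
    _ ≤ ‖((v * star u : unitary A) - 1 : A)‖ :=
        Unitary.norm_expUnitary_smul_argSelfAdjoint_sub_one_le _ t.2 hvu
    _ = ‖(v - u : A)‖ := (Unitary.norm_sub_eq v u).symm

lemma uZero_of_path {G A : Type*} [TopologicalSpace G] [CStarAlgebra A] {α : G → A ≃⋆ₐ[ℂ] A}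
    {ε : ℝ} {K : Set G} {u : A} (γ : Path 1 u)
    (hγ : ∀ a ∈ range γ, a ∈ unitary A ∧ ∀ g ∈ K, ‖α g a - a‖ ≤ ε) : UZero α ε K u :=
  have hext : ∀ t, γ.extend t ∈ range γ := fun t => γ.extend_range ▸ mem_range_self t
  ⟨γ.extend, γ.continuous_extend.continuousOn, γ.extend_zero, γ.extend_one,
    fun t _ => (hγ _ (hext t)).1, fun t _ => (hγ _ (hext t)).2⟩

lemma CStarRing.norm_le_one_of_mem_unitary {A : Type*} [NormedRing A] [StarRing A] [CStarRing A]
    {U : A} (hU : U ∈ unitary A) : ‖U‖ ≤ 1 := by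
  rcases subsingleton_or_nontrivial A with _ | _
  · simp [Subsingleton.elim U 0]
  · exact (CStarRing.norm_of_mem_unitary hU).le

lemma uZero_of_path_of_norm_sub_lt_two {G A : Type*} [TopologicalSpace G] [CStarAlgebra A]
    {α : G → A ≃⋆ₐ[ℂ] A} {K : Set G} {M : ℝ} {w : ℝ → A} {u : A} (hu : u ∈ unitary A)
    (hwcont : ContinuousOn w (Icc 0 1)) (hwuni : ∀ t ∈ Icc (0:ℝ) 1, w t ∈ unitary A)
    (hw0 : w 0 = 1) (hwu : ‖w 1 - u‖ < 2)
    (hM : ∀ t ∈ Icc (0:ℝ) 1, ∀ g ∈ K, ‖α g (w t) - w t‖ ≤ M) :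
    UZero α (M + 2 * ‖w 1 - u‖) K u := by
  have h1 : (1:ℝ) ∈ Icc 0 1 := right_mem_Icc.2 zero_le_one
  let w₁ : unitary A := ⟨w 1, hwuni 1 h1⟩
  let γ := Unitary.path w₁ ⟨u, hu⟩ (norm_sub_rev (w 1) u ▸ hwu)
  refine uZero_of_path ((Path.ofLine hwcont hw0 rfl).trans (γ.map continuous_subtype_val)) ?_
  rw [Path.trans_range]
  rintro _ (⟨t, rfl⟩ | ⟨s, rfl⟩)
  · obtain ⟨t', ht', heq⟩ := Path.ofLine_mem hwcont hw0 rfl t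
    rw [← heq]
    exact ⟨hwuni t' ht', fun g hg => (hM t' ht' g hg).trans (by linarith [norm_nonneg (w 1 - u)])⟩
  · refine ⟨(γ s).2, fun g hg => ?_⟩
    calc ‖α g (γ s) - γ s‖ ≤ ‖α g w₁ - w₁‖ + 2 * ‖(γ s - w₁ : A)‖ :=
          norm_map_sub_self_le (α g) (StarAlgEquiv.norm_map _) _ _
      _ ≤ M + 2 * ‖w 1 - u‖ := by
          gcongr
          · exact hM 1 h1 g hg
          · exact (Unitary.norm_path_sub_le _ _ _ s).trans_eq (norm_sub_rev _ _)

theorem stmt9_general {G A : Type*} [TopologicalSpace G]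
    [CStarAlgebra A]
    (α : G → A ≃⋆ₐ[ℂ] A)
    (ε : ℝ) (K : Set G) (hK : IsCompact K)
    (u : ℕ → A) (hu : ∀ n, u n ∈ unitary A)
    (w : ℕ → ℝ → A)
    (hwcont : ∀ n, ContinuousOn (w n) (Set.Icc 0 1))
    (hwuni : ∀ n, ∀ t ∈ Set.Icc (0:ℝ) 1, w n t ∈ unitary A)
    (hw0 : ∀ n, w n 0 = 1)
    (hw1 : Filter.Tendsto (fun n => ‖w n 1 - u n‖) Filter.atTop (nhds 0))
    (hequi : Equicontinuous fun n => fun p : Set.Icc (0:ℝ) 1 × G => α p.2 (w n p.1))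
    (hpt : ∀ t ∈ Set.Icc (0:ℝ) 1, ∀ g ∈ K,
      Filter.limsup (fun n => ‖α g (w n t) - w n t‖) Filter.atTop ≤ ε) :
    ∃ δ : ℕ → ℝ, (∀ n, 0 ≤ δ n) ∧ Filter.Tendsto δ Filter.atTop (nhds 0) ∧
      ∀ᶠ n in Filter.atTop, UZero α (ε + δ n) K (u n) := by
  set D : ℕ → Icc (0:ℝ) 1 × G → ℝ := fun n p => ‖α p.2 (w n p.1) - w n p.1‖
  have hD_le : ∀ n p, D n p ≤ 2 := fun n p => by
    have := norm_map_sub_self_le (α p.2) (StarAlgEquiv.norm_map _) (w n p.1) 0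
    simp only [map_zero, sub_zero, norm_zero, zero_add] at this
    linarith [CStarRing.norm_le_one_of_mem_unitary (hwuni n _ p.1.2)]
  have hD_equi : Equicontinuous D :=
    hequi.norm_apply_sub_of_isometry (f := fun n (t : Icc (0:ℝ) 1) => w n t)
      fun g => StarAlgEquiv.isometry (α g)
  have hD_unif : ∀ η > 0, ∀ᶠ n in atTop, ∀ p ∈ univ ×ˢ K, D n p ≤ ε + η := fun η hη =>
    hD_equi.eventually_forall_le_of_limsup_le (isCompact_univ.prod hK)
      (fun p _ => isBoundedUnder_of ⟨2, (hD_le · p)⟩) (fun p hp => hpt p.1 p.1.2 p.2 hp.2) hη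
  obtain ⟨δ, hδ_nonneg, hδ, hDδ⟩ := exists_tendsto_zero_forall_le_add
    (fun n => ⟨2, forall_mem_image.2 fun p _ => hD_le n p⟩) hD_unif
  refine ⟨fun n => δ n + 2 * ‖w n 1 - u n‖, fun n => add_nonneg (hδ_nonneg n) (by positivity),
    by simpa using hδ.add (hw1.const_mul 2), ?_⟩
  filter_upwards [hw1.eventually_lt_const zero_lt_two] with n hn
  rw [← add_assoc]
  exact uZero_of_path_of_norm_sub_lt_two (hu n) (hwcont n) (hwuni n) (hw0 n) hn
    fun t ht g hg => hDδ n (⟨t, ht⟩, g) ⟨trivial, hg⟩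

/-- Sequences of unitaries approximately reached by unitary paths starting at `1` whose
`α`-oscillation over `K` is asymptotically at most `ε` lie, for large `n`, in
`U₀(A^α_{ε+δ_n,K})` for some sequence `δ_n → 0`. -/
theorem stmt9 {G A : Type*} [Group G] [TopologicalSpace G] [IsTopologicalGroup G]
    [SecondCountableTopology G] [LocallyCompactSpace G]
    [CStarAlgebra A]
    (α : G → A ≃⋆ₐ[ℂ] A)
    (hmul : ∀ g h : G, α (g * h) = (α h).trans (α g))
    (hcont : ∀ a : A, Continuous fun g => α g a)
    (ε : ℝ) (hε : 0 < ε) (K : Set G) (hK : IsCompact K)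
    (u : ℕ → A) (hu : ∀ n, u n ∈ unitary A)
    (w : ℕ → ℝ → A)
    (hwcont : ∀ n, ContinuousOn (w n) (Set.Icc 0 1))
    (hwuni : ∀ n, ∀ t ∈ Set.Icc (0:ℝ) 1, w n t ∈ unitary A)
    (hw0 : ∀ n, w n 0 = 1)
    (hw1 : Filter.Tendsto (fun n => ‖w n 1 - u n‖) Filter.atTop (nhds 0))
    (hequi : Equicontinuous fun n => fun p : Set.Icc (0:ℝ) 1 × G => α p.2 (w n p.1))
    (hpt : ∀ t ∈ Set.Icc (0:ℝ) 1, ∀ g ∈ K,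
      Filter.limsup (fun n => ‖α g (w n t) - w n t‖) Filter.atTop ≤ ε) :
    ∃ δ : ℕ → ℝ, (∀ n, 0 ≤ δ n) ∧ Filter.Tendsto δ Filter.atTop (nhds 0) ∧
      ∀ᶠ n in Filter.atTop, UZero α (ε + δ n) K (u n) :=
  stmt9_general α ε K hK u hu w hwcont hwuni hw0 hw1 hequi hpt
end
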